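/- (Sufficiency direction of Ruskai's condition.) Let η and ρ be positive definite density matrices on ℂ^{dA}⊗ℂ^{dB} such that log η − log ρ = (log(Tr_B η) − log(Tr_B ρ)) ⊗ I_B. Then the relative entropy is preserved under the partial trace: D(η‖ρ) = D(Tr_B η‖Tr_B ρ). -/

import Mathlib

open Matrix
open scoped Kronecker ComplexOrder

noncomputable section

/-- The partial trace over the second tensor factor. -/
def ptrace {dA dB : ℕ} (ρ : Matrix (Fin dA × Fin dB) (Fin dA × Fin dB) ℂ) :
    Matrix (Fin dA) (Fin dA) ℂ :=
  Matrix.of fun a a' => ∑ b : Fin dB, ρ (a, b) (a', b)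

/-- Matrix logarithm of a Hermitian matrix, applying the real logarithm to the
eigenvalues in a spectral decomposition (junk value `0` for non-Hermitian input). -/
def mlog {n : Type*} [Fintype n] [DecidableEq n] (A : Matrix n n ℂ) : Matrix n n ℂ :=
  if h : A.IsHermitian then h.cfc Real.log else 0

open Classical in
/-- The positive semidefinite square root (junk value `0` otherwise). -/
def msqrt {n : Type*} [Fintype n] [DecidableEq n] (A : Matrix n n ℂ) : Matrix n n ℂ :=
  if h : A.PosSemidef then h.1.cfc Real.sqrt else 0

/-- A density matrix: Hermitian positive semidefinite with trace one. -/
def IsDensityMatrix {n : Type*} [Fintype n] [DecidableEq n] (A : Matrix n n ℂ) : Prop :=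
  A.PosSemidef ∧ A.trace = 1

/-- The von Neumann entropy `S(A) = -Tr(A log A)`. -/
def vnEntropy {n : Type*} [Fintype n] [DecidableEq n] (A : Matrix n n ℂ) : ℂ :=
  -(A * mlog A).trace

/-- The Umegaki relative entropy `D(ω‖ρ) = Tr(ω log ω) - Tr(ω log ρ)`. -/
def relEnt {n : Type*} [Fintype n] [DecidableEq n] (ω ρ : Matrix n n ℂ) : ℂ :=
  (ω * mlog ω).trace - (ω * mlog ρ).trace

/-- The Petz recovery map for the partial trace:
`R_ρ(ω) = ρ^{1/2} ((ρ_A^{-1/2} ω ρ_A^{-1/2}) ⊗ I_B) ρ^{1/2}`. -/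
def petz {dA dB : ℕ} (ρ : Matrix (Fin dA × Fin dB) (Fin dA × Fin dB) ℂ)
    (ω : Matrix (Fin dA) (Fin dA) ℂ) : Matrix (Fin dA × Fin dB) (Fin dA × Fin dB) ℂ :=
  msqrt ρ * (((msqrt (ptrace ρ))⁻¹ * ω * (msqrt (ptrace ρ))⁻¹) ⊗ₖ
    (1 : Matrix (Fin dB) (Fin dB) ℂ)) * msqrt ρ

/-- Condition S: `ρ` is positive definite and separable of the form
`ρ = ∑ i, α i • (x i x i† ⊗ ρ_B i)` for an orthonormal basis `x` of `ℂ^{dA}`, `α i > 0`,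
density matrices `ρ_B i`, and `ω` commutes with `Tr_B ρ`. -/
def CondS {dA dB : ℕ} (ω : Matrix (Fin dA) (Fin dA) ℂ)
    (ρ : Matrix (Fin dA × Fin dB) (Fin dA × Fin dB) ℂ) : Prop :=
  ρ.PosDef ∧
  (∃ (x : Fin dA → (Fin dA → ℂ)) (α : Fin dA → ℝ) (σ : Fin dA → Matrix (Fin dB) (Fin dB) ℂ),
    (∀ i j, star (x i) ⬝ᵥ x j = if i = j then 1 else 0) ∧
    (∀ i, 0 < α i) ∧ (∀ i, IsDensityMatrix (σ i)) ∧
    ρ = ∑ i, (α i : ℂ) • (Matrix.vecMulVec (x i) (star (x i)) ⊗ₖ σ i)) ∧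
  ω * ptrace ρ = ptrace ρ * ω

/-- A matrix on a product index type is block diagonal with respect to the first factor. -/
def BlockDiagFst {α β : Type*} (M : Matrix (α × β) (α × β) ℂ) : Prop :=
  ∀ u a v b, u ≠ v → M (u, a) (v, b) = 0

/-- The `i`-th diagonal block of a matrix on a product index type. -/
def blockFst {α β : Type*} (M : Matrix (α × β) (α × β) ℂ) (i : α) : Matrix β β ℂ :=
  Matrix.of fun k l => M (i, k) (i, l)

/-! Both relative entropies are `Tr(ω (log ω - log σ))`, and the partial trace is the adjoint
of `X ↦ X ⊗ I_B` for the trace pairing; Ruskai's condition turns the first into the second. -/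

lemma relEnt_eq_trace_mul_sub {n : Type*} [Fintype n] [DecidableEq n] (ω σ : Matrix n n ℂ) :
    relEnt ω σ = (ω * (mlog ω - mlog σ)).trace := by
  rw [mul_sub, trace_sub, relEnt]

lemma trace_mul_kronecker_one {dA dB : ℕ} (M : Matrix (Fin dA × Fin dB) (Fin dA × Fin dB) ℂ)
    (X : Matrix (Fin dA) (Fin dA) ℂ) :
    (M * (X ⊗ₖ (1 : Matrix (Fin dB) (Fin dB) ℂ))).trace = (ptrace M * X).trace := by
  simp only [ptrace, trace, diag, mul_apply, kroneckerMap_apply, of_apply,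
    Fintype.sum_prod_type, one_apply, mul_ite, mul_one, mul_zero, Finset.sum_ite_eq',
    Finset.mem_univ, if_true, Finset.sum_mul]
  exact Finset.sum_congr rfl fun _ _ => Finset.sum_comm

theorem ruskai_sufficiency_general {dA dB : ℕ}
    (η ρ : Matrix (Fin dA × Fin dB) (Fin dA × Fin dB) ℂ)
    (hRuskai : mlog η - mlog ρ =
      (mlog (ptrace η) - mlog (ptrace ρ)) ⊗ₖ (1 : Matrix (Fin dB) (Fin dB) ℂ)) :
    relEnt η ρ = relEnt (ptrace η) (ptrace ρ) := by
  rw [relEnt_eq_trace_mul_sub, relEnt_eq_trace_mul_sub, hRuskai, trace_mul_kronecker_one]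

/-- Sufficiency direction of Ruskai's condition: it implies saturation of
the monotonicity of relative entropy under the partial trace. -/
theorem ruskai_sufficiency {dA dB : ℕ}
    (η ρ : Matrix (Fin dA × Fin dB) (Fin dA × Fin dB) ℂ)
    (hη : η.PosDef) (hη1 : η.trace = 1) (hρ : ρ.PosDef) (hρ1 : ρ.trace = 1)
    (hRuskai : mlog η - mlog ρ =
      (mlog (ptrace η) - mlog (ptrace ρ)) ⊗ₖ (1 : Matrix (Fin dB) (Fin dB) ℂ)) :
    relEnt η ρ = relEnt (ptrace η) (ptrace ρ) :=
  ruskai_sufficiency_general η ρ hRuskai
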